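/- Let $(X,\mathcal{X},\mu,T)$ be an invertible measure preserving system, $k \in \mathbb{N}$, and let $f_\epsilon \in L^\infty(\mu)$ for each $\epsilon \in \{0,1\}^k \setminus \{0\}$ be bounded by 1. Let $b_1,\dots,b_k: \mathbb{N}\to\mathbb{C}$ satisfy $b_i(n)/n^c \to 0$ for all $c>0$ and $\frac{1}{N}\sum_{n=1}^{N}|b_i(n)| \leq 1$ for all $N$. Then for each $1 \leq j \leq k$, $\left\|\frac{1}{N^k}\sum_{1\leq n_1,\dots,n_k\leq N}\prod_{i=1}^{k}b_i(n_i)\prod_{\epsilon\in\{0,1\}^k_*}T^{\epsilon_1 n_1+\dots+\epsilon_k n_k}f_\epsilon\right\|_{L^2(\mu)} \leq C_k\left(\|b_j \cdot \mathbf{1}_{[1,N]}\|_{U^2(\mathbb{Z}_{2N})} + o_N(1)\right)$, where $C_k$ depends only on $k$ and the $o_N(1)$ term depends only on the sequences $b_1,\dots,b_k$. -/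

import Mathlib

open Filter MeasureTheory

/-- The Gowers uniformity norm `U^d` on `ℤ/Nℤ`, for functions given on the
representatives `{0,…,N-1}` (addition taken mod `N`). The value at `d = 0` is junk. -/
noncomputable def gowersNormNat (N : ℕ) : ℕ → (ℕ → ℂ) → ℝ
  | 0, _ => 0
  | 1, a => ‖(∑ n ∈ Finset.range N, a n) / (N : ℂ)‖
  | (d + 2), a =>
      ((∑ h ∈ Finset.range N,
        (gowersNormNat N (d + 1) (fun n => a ((n + h) % N) * (starRingEnd ℂ) (a (n % N))))
          ^ (2 ^ (d + 1))) / (N : ℝ)) ^ (((2 : ℝ) ^ (d + 2))⁻¹)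

/-!
Freeze every coordinate except `n_j`. Since `T^{ε·n} = T^{ε·n'} ∘ T^{ε_j n_j}`, where `n'` is `n`
with `n_j = 0`, the cube average becomes a combination, with coefficients of total mass at most
`N^{k-1}`, of functions `g · ∑_{t ≤ N} b_j(t) F ∘ T^t` with `|F|, |g| ≤ 1`. Averaging the `L²`
norm of such an ergodic average over the shifts `T^m`, `m ≤ N`, reduces it to a bound along each
orbit, and Plancherel on `ℤ/(2N+1)` bounds that by `2 sup_{|z|=1} |∑_{t ≤ N} b_j(t) z^t|`.
Finally `|∑ a(n) z^n|²` is a unimodular combination of the autocorrelations of `a = b_j 1_{[1,N]}`,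
whose `ℓ²` norm over `ℤ_{2N}` is the `U²` norm, so the exponential sum is at most
`2N ‖a‖_{U²(ℤ_{2N})}`.
-/

open Finset Function MeasureTheory
open scoped ENNReal

local notation "conj" => starRingEnd ℂ

lemma gowersNormNat_two_eq (M : ℕ) (a : ℕ → ℂ) :
    gowersNormNat M 2 a =
      ((∑ h ∈ range M, (‖∑ n ∈ range M, a ((n + h) % M) * conj (a n)‖ / M) ^ 2) / M) ^
        (4⁻¹ : ℝ) := by
  change ((∑ h ∈ range M, ‖(∑ n ∈ range M, a ((n + h) % M) * conj (a (n % M))) / (M : ℂ)‖ ^ 2)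
    / (M : ℝ)) ^ ((2 : ℝ) ^ 2)⁻¹ = _
  have hmod (h : ℕ) : ∑ n ∈ range M, a ((n + h) % M) * conj (a (n % M)) =
      ∑ n ∈ range M, a ((n + h) % M) * conj (a n) :=
    Finset.sum_congr rfl fun n hn => by rw [Nat.mod_eq_of_lt (mem_range.mp hn)]
  norm_num only [hmod, norm_div, Complex.norm_natCast]

lemma gowersNormNat_two_nonneg (M : ℕ) (a : ℕ → ℂ) : 0 ≤ gowersNormNat M 2 a := by
  rw [gowersNormNat_two_eq]; positivity

lemma gowersNormNat_two_pow_four (M : ℕ) (a : ℕ → ℂ) :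
    gowersNormNat M 2 a ^ 4 =
      (∑ h ∈ range M, ‖∑ n ∈ range M, a ((n + h) % M) * conj (a n)‖ ^ 2) / M ^ 3 := by
  rw [gowersNormNat_two_eq, ← Real.rpow_natCast, ← Real.rpow_mul (by positivity)]
  norm_num [div_pow, ← Finset.sum_div]
  ring

lemma Finset.sum_range_eq_sum_range_add_mod {β : Type*} [AddCommMonoid β] {M m : ℕ} (hm : m < M)
    (g : ℕ → β) : ∑ n ∈ range M, g n = ∑ h ∈ range M, g ((m + h) % M) := by
  have : NeZero M := ⟨by omega⟩
  rw [← Fin.sum_univ_eq_sum_range, ← Fin.sum_univ_eq_sum_range (fun h => g ((m + h) % M)),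
    ← Equiv.sum_comp (Equiv.addLeft (⟨m, hm⟩ : Fin M))]
  simp [Fin.val_add]

lemma natCast_add_mod_sub_eq {N m h : ℕ} (hm : m ∈ Icc 1 N) (hmh : (m + h) % (2 * N) ∈ Icc 1 N)
    (h2N : h < 2 * N) :
    (((m + h) % (2 * N) : ℕ) : ℤ) - m = h - if h < N then 0 else 2 * N := by
  rw [mem_Icc] at hm hmh
  rw [Nat.add_mod_eq_ite, Nat.mod_eq_of_lt (by omega), Nat.mod_eq_of_lt h2N] at hmh ⊢
  split_ifs at hmh ⊢ <;> omega

lemma norm_sq_sum_mul_pow_le_sum_norm_autocorr {N : ℕ} {a : ℕ → ℂ}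
    (ha : ∀ n, a n ≠ 0 → n ∈ Icc 1 N) {z : ℂ} (hz : ‖z‖ = 1) :
    ‖∑ n ∈ range (2 * N), a n * z ^ n‖ ^ 2 ≤
      ∑ h ∈ range (2 * N), ‖∑ m ∈ range (2 * N), a ((m + h) % (2 * N)) * conj (a m)‖ := by
  set M := 2 * N
  set R : ℕ → ℂ := fun h => ∑ m ∈ range M, a ((m + h) % M) * conj (a m)
  -- For `n, m ∈ [1, N]` the difference `n - m ∈ (-N, N)` is recovered from `h = (n - m) mod 2N`,
  -- so `z ^ n * conj (z ^ m) = w h`.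
  set w : ℕ → ℂ := fun h => z ^ ((h : ℤ) - if h < N then 0 else (M : ℤ))
  have hz0 : z ≠ 0 := norm_ne_zero_iff.mp (by simp [hz])
  have phase : ∀ m ∈ range M, ∀ h ∈ range M,
      a ((m + h) % M) * z ^ ((m + h) % M) * conj (a m * z ^ m) =
        w h * (a ((m + h) % M) * conj (a m)) := by
    intro m hm h hh
    by_cases hzero : a ((m + h) % M) * conj (a m) = 0
    · rcases mul_eq_zero.mp hzero with h0 | h0 <;> simp [h0]
    obtain ⟨hn, hm'⟩ : a ((m + h) % M) ≠ 0 ∧ a m ≠ 0 := by simpa [not_or] using hzero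
    have hwh : w h = z ^ ((((m + h) % M : ℕ) : ℤ) - m) := by
      rw [natCast_add_mod_sub_eq (ha m hm') (ha _ hn) (mem_range.mp hh)]
      push_cast
      rfl
    rw [hwh, zpow_sub₀ hz0, zpow_natCast, zpow_natCast, map_mul, map_pow,
      ← Complex.inv_eq_conj hz, inv_pow]
    ring
  have expand : ((‖∑ n ∈ range M, a n * z ^ n‖ ^ 2 : ℝ) : ℂ) = ∑ h ∈ range M, w h * R h := by
    rw [Complex.ofReal_pow, ← Complex.mul_conj', map_sum, sum_mul_sum, sum_comm]
    rw [sum_congr rfl fun m hm => sum_range_eq_sum_range_add_mod (mem_range.mp hm) _, sum_comm]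
    simp_rw [R, mul_sum]
    exact sum_congr rfl fun h hh => sum_congr rfl fun m hm => phase m hm h hh
  have hw : ∀ h, ‖w h‖ = 1 := fun h => by simp [w, norm_zpow, hz]
  calc ‖∑ n ∈ range M, a n * z ^ n‖ ^ 2 = ‖∑ h ∈ range M, w h * R h‖ := by
        rw [← expand, Complex.norm_real, Real.norm_of_nonneg (by positivity)]
    _ ≤ ∑ h ∈ range M, ‖w h * R h‖ := norm_sum_le _ _
    _ = ∑ h ∈ range M, ‖R h‖ := by simp [hw]

theorem norm_sum_mul_pow_le_gowersNormNat (b : ℕ → ℂ) (N : ℕ) {z : ℂ} (hz : ‖z‖ = 1) :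
    ‖∑ n ∈ Icc 1 N, b n * z ^ n‖ ≤
      2 * N * gowersNormNat (2 * N) 2 (fun n => if 1 ≤ n ∧ n ≤ N then b n else 0) := by
  rcases N.eq_zero_or_pos with rfl | hN
  · simp
  set a : ℕ → ℂ := fun n => if 1 ≤ n ∧ n ≤ N then b n else 0
  set M := 2 * N
  set G := gowersNormNat M 2 a
  set R : ℕ → ℝ := fun h => ‖∑ m ∈ range M, a ((m + h) % M) * conj (a m)‖
  have ha (n : ℕ) (hn : a n ≠ 0) : n ∈ Icc 1 N := by
    by_contra h
    exact hn (if_neg (by simpa using h))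
  have hS : ∑ n ∈ Icc 1 N, b n * z ^ n = ∑ n ∈ range M, a n * z ^ n := by
    simp_rw [a, ite_mul, zero_mul]
    rw [← sum_filter]
    congr 1
    ext n
    simp only [mem_Icc, mem_filter, mem_range]
    omega
  have hR : ∑ h ∈ range M, R h ^ 2 = M ^ 3 * G ^ 4 := by
    rw [gowersNormNat_two_pow_four, mul_div_cancel₀ _ (by positivity)]
  have hG := gowersNormNat_two_nonneg M a
  rw [hS, ← pow_le_pow_iff_left₀ (norm_nonneg _) (by positivity) four_ne_zero]
  calc ‖∑ n ∈ range M, a n * z ^ n‖ ^ 4 = (‖∑ n ∈ range M, a n * z ^ n‖ ^ 2) ^ 2 := by ring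
    _ ≤ (∑ h ∈ range M, R h) ^ 2 := by
        gcongr
        exact norm_sq_sum_mul_pow_le_sum_norm_autocorr ha hz
    _ ≤ M * ∑ h ∈ range M, R h ^ 2 := by
        simpa using sq_sum_le_card_mul_sum_sq (s := range M) (f := R)
    _ = (2 * N * G) ^ 4 := by rw [hR]; push_cast [M]; ring

section FiniteFourier

variable {G : Type*} [AddCommGroup G] [Fintype G]

lemma sum_addChar_norm_sq_sum_mul (Φ : G → ℂ) :
    ∑ ψ : AddChar G ℂ, ‖∑ x, Φ x * ψ x‖ ^ 2 = Fintype.card G * ∑ x, ‖Φ x‖ ^ 2 := by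
  classical
  apply Complex.ofReal_injective
  push_cast
  simp_rw [← Complex.mul_conj', map_sum, map_mul, ← AddChar.map_neg_eq_conj, sum_mul_sum]
  calc ∑ ψ : AddChar G ℂ, ∑ x, ∑ y, Φ x * ψ x * (conj (Φ y) * ψ (-y))
      = ∑ x, ∑ y, Φ x * conj (Φ y) * ∑ ψ : AddChar G ℂ, ψ (x - y) := by
        simp_rw [mul_sum, sub_eq_add_neg, AddChar.map_add_eq_mul]
        rw [sum_comm]
        refine sum_congr rfl fun x _ => ?_
        rw [sum_comm]
        exact sum_congr rfl fun y _ => sum_congr rfl fun ψ _ => by ring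
    _ = Fintype.card G * ∑ x, Φ x * conj (Φ x) := by
        simp [AddChar.sum_apply_eq_ite, sub_eq_zero, mul_sum, mul_comm]

lemma sum_norm_sq_sum_mul_add_le (c Φ : G → ℂ) {K : ℝ}
    (hK : ∀ ψ : AddChar G ℂ, ‖∑ x, c x * ψ (-x)‖ ≤ K) :
    ∑ m, ‖∑ n, c n * Φ (m + n)‖ ^ 2 ≤ K ^ 2 * ∑ r, ‖Φ r‖ ^ 2 := by
  set D : G → ℂ := fun m => ∑ n, c n * Φ (m + n)
  have transform (ψ : AddChar G ℂ) :
      ∑ m, D m * ψ m = (∑ n, c n * ψ (-n)) * ∑ r, Φ r * ψ r := by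
    simp_rw [D, sum_mul, mul_sum]
    rw [sum_comm]
    refine sum_congr rfl fun n _ => ?_
    rw [← Equiv.sum_comp (Equiv.subRight n)]
    refine sum_congr rfl fun r _ => ?_
    rw [Equiv.subRight_apply, sub_add_cancel, sub_eq_add_neg, AddChar.map_add_eq_mul]
    ring
  have hcard : (0 : ℝ) < Fintype.card G := by exact_mod_cast Fintype.card_pos
  refine le_of_mul_le_mul_left ?_ hcard
  calc Fintype.card G * ∑ m, ‖D m‖ ^ 2
      = ∑ ψ : AddChar G ℂ, ‖∑ n, c n * ψ (-n)‖ ^ 2 * ‖∑ r, Φ r * ψ r‖ ^ 2 := by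
        simp_rw [← sum_addChar_norm_sq_sum_mul, transform, norm_mul, mul_pow]
    _ ≤ ∑ ψ : AddChar G ℂ, K ^ 2 * ‖∑ r, Φ r * ψ r‖ ^ 2 := by
        gcongr with ψ
        exact hK ψ
    _ = Fintype.card G * (K ^ 2 * ∑ r, ‖Φ r‖ ^ 2) := by
        rw [← mul_sum, sum_addChar_norm_sq_sum_mul]; ring

end FiniteFourier

lemma Fin.sum_ite_val_mem {M : Type*} [AddCommMonoid M] {P : ℕ} {s : Finset ℕ} (hs : s ⊆ range P)
    (g : ℕ → M) : ∑ i : Fin P, (if (i : ℕ) ∈ s then g i else 0) = ∑ n ∈ s, g n := by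
  rw [Fin.sum_univ_eq_sum_range (fun n => if n ∈ s then g n else 0), sum_ite_mem,
    inter_eq_right.mpr hs]

open Fin.CommRing in
lemma sum_norm_sq_sum_mul_add_Icc_le {N : ℕ} (c φ : ℕ → ℂ) {K : ℝ}
    (hK : ∀ z : ℂ, ‖z‖ = 1 → ‖∑ n ∈ Icc 1 N, c n * z ^ n‖ ≤ K) :
    ∑ m ∈ Icc 1 N, ‖∑ n ∈ Icc 1 N, c n * φ (m + n)‖ ^ 2 ≤
      K ^ 2 * ∑ r ∈ Icc 2 (2 * N), ‖φ r‖ ^ 2 := by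
  -- Modulo `2N + 1` the sums `m + n ≤ 2N` do not wrap around.
  set P := 2 * N + 1
  have hIcc : Icc 1 N ⊆ range P := fun n hn => by simp only [mem_Icc, mem_range] at hn ⊢; omega
  have hIcc₂ : Icc 2 (2 * N) ⊆ range P := fun n hn => by
    simp only [mem_Icc, mem_range] at hn ⊢; omega
  set c' : Fin P → ℂ := fun i => if (i : ℕ) ∈ Icc 1 N then c i else 0
  set Φ : Fin P → ℂ := fun i => if (i : ℕ) ∈ Icc 2 (2 * N) then φ i else 0
  have hcorr (m : ℕ) (hm : m ∈ Icc 1 N) :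
      ∑ n ∈ Icc 1 N, c n * φ (m + n) = ∑ i, c' i * Φ (m + i) := by
    rw [← Fin.sum_ite_val_mem hIcc]
    refine sum_congr rfl fun i _ => ?_
    by_cases hi : (i : ℕ) ∈ Icc 1 N
    · simp only [mem_Icc] at hm hi
      have hval : (((m : Fin P) + i : Fin P) : ℕ) = m + i := by
        rw [Fin.val_add, Fin.val_natCast, Nat.mod_add_mod, Nat.mod_eq_of_lt (by omega)]
      simp only [c', Φ, mem_Icc, hval, if_pos hi, if_pos (show 2 ≤ m + i ∧ m + i ≤ 2 * N by omega)]
    · simp only [c', if_neg hi, zero_mul]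
  have hc' (ψ : AddChar (Fin P) ℂ) : ‖∑ i, c' i * ψ (-i)‖ ≤ K := by
    have hψ (i : Fin P) : ψ (-i) = ψ (-1) ^ (i : ℕ) := by
      rw [← AddChar.map_nsmul_eq_pow, nsmul_eq_mul, mul_neg_one, Fin.cast_val_eq_self]
    convert hK (ψ (-1)) (AddChar.norm_apply _ _) using 2
    rw [← Fin.sum_ite_val_mem hIcc]
    refine sum_congr rfl fun i _ => ?_
    simp only [c', ite_mul, zero_mul]
    rw [hψ]
  calc ∑ m ∈ Icc 1 N, ‖∑ n ∈ Icc 1 N, c n * φ (m + n)‖ ^ 2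
      = ∑ m ∈ Icc 1 N, ‖∑ i, c' i * Φ (m + i)‖ ^ 2 :=
        sum_congr rfl fun m hm => by rw [hcorr m hm]
    _ ≤ ∑ m ∈ range P, ‖∑ i, c' i * Φ (m + i)‖ ^ 2 :=
        sum_le_sum_of_subset_of_nonneg hIcc fun _ _ _ => by positivity
    _ = ∑ m : Fin P, ‖∑ i, c' i * Φ (m + i)‖ ^ 2 := by
        rw [← Fin.sum_univ_eq_sum_range]
        simp only [Fin.cast_val_eq_self]
    _ ≤ K ^ 2 * ∑ r, ‖Φ r‖ ^ 2 := sum_norm_sq_sum_mul_add_le c' Φ hc'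
    _ = K ^ 2 * ∑ r ∈ Icc 2 (2 * N), ‖φ r‖ ^ 2 := by
        rw [← Fin.sum_ite_val_mem hIcc₂]
        simp [Φ, apply_ite (fun z : ℂ => ‖z‖ ^ 2)]

lemma eLpNorm_two_le_ofReal {α E : Type*} [MeasurableSpace α] {μ : Measure α} [NormedAddCommGroup E]
    {f : α → E} {R : ℝ} (hR : 0 ≤ R) (h : ∫⁻ x, ‖f x‖ₑ ^ 2 ∂μ ≤ ENNReal.ofReal (R ^ 2)) :
    eLpNorm f 2 μ ≤ ENNReal.ofReal R := by
  rw [eLpNorm_eq_lintegral_rpow_enorm_toReal two_ne_zero ENNReal.ofNat_ne_top]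
  calc (∫⁻ x, ‖f x‖ₑ ^ (2 : ℝ≥0∞).toReal ∂μ) ^ (1 / (2 : ℝ≥0∞).toReal)
      ≤ ENNReal.ofReal (R ^ 2) ^ (1 / 2 : ℝ) := by
        simp only [ENNReal.toReal_ofNat, ENNReal.rpow_two]
        gcongr
    _ = ENNReal.ofReal R := by
        rw [ENNReal.ofReal_rpow_of_nonneg (by positivity) (by norm_num), ← Real.sqrt_eq_rpow,
          Real.sqrt_sq hR]

lemma sum_norm_sq_sum_mul_comp_iterate_le {X : Type*} (T : X → X) {F : X → ℂ}
    (hF1 : ∀ x, ‖F x‖ ≤ 1) {N : ℕ} (c : ℕ → ℂ) {K : ℝ}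
    (hK : ∀ z : ℂ, ‖z‖ = 1 → ‖∑ n ∈ Icc 1 N, c n * z ^ n‖ ≤ K) (x : X) :
    ∑ m ∈ Icc 1 N, ‖∑ n ∈ Icc 1 N, c n * F (T^[n] (T^[m] x))‖ ^ 2 ≤ N * (2 * K) ^ 2 := by
  have hF : ∑ r ∈ Icc 2 (2 * N), ‖F (T^[r] x)‖ ^ 2 ≤ 2 * N :=
    calc ∑ r ∈ Icc 2 (2 * N), ‖F (T^[r] x)‖ ^ 2 ≤ ∑ r ∈ Icc 2 (2 * N), (1 : ℝ) :=
          sum_le_sum fun r _ => pow_le_one₀ (norm_nonneg _) (hF1 _)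
      _ ≤ 2 * N := by
          rw [sum_const, Nat.card_Icc, nsmul_one]
          norm_cast
          omega
  have hshift (m n : ℕ) : T^[n] (T^[m] x) = T^[m + n] x := by rw [add_comm, iterate_add_apply]
  simp_rw [hshift]
  calc _ ≤ K ^ 2 * ∑ r ∈ Icc 2 (2 * N), ‖F (T^[r] x)‖ ^ 2 :=
        sum_norm_sq_sum_mul_add_Icc_le c (fun r => F (T^[r] x)) hK
    _ ≤ K ^ 2 * (2 * N) := by gcongr
    _ ≤ N * (2 * K) ^ 2 := by nlinarith

theorem eLpNorm_sum_mul_comp_iterate_le {X : Type*} [MeasurableSpace X] {μ : Measure X}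
    [IsProbabilityMeasure μ] {T : X → X} (hT : MeasurePreserving T μ μ) {F : X → ℂ}
    (hF : Measurable F) (hF1 : ∀ x, ‖F x‖ ≤ 1) {N : ℕ} (hN : 0 < N) (c : ℕ → ℂ) {K : ℝ}
    (hK : ∀ z : ℂ, ‖z‖ = 1 → ‖∑ n ∈ Icc 1 N, c n * z ^ n‖ ≤ K) :
    eLpNorm (fun x => ∑ n ∈ Icc 1 N, c n * F (T^[n] x)) 2 μ ≤ ENNReal.ofReal (2 * K) := by
  set S : X → ℂ := fun x => ∑ n ∈ Icc 1 N, c n * F (T^[n] x)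
  have hS : Measurable S :=
    Finset.measurable_sum _ fun n _ => (hF.comp (hT.measurable.iterate n)).const_mul _
  have hK0 : 0 ≤ K := (norm_nonneg _).trans (hK 1 norm_one)
  have pointwise (x : X) :
      ∑ m ∈ Icc 1 N, ‖S (T^[m] x)‖ₑ ^ 2 ≤ ENNReal.ofReal (N * (2 * K) ^ 2) := by
    simp_rw [← ofReal_norm, ← ENNReal.ofReal_pow (norm_nonneg _)]
    rw [← ENNReal.ofReal_sum_of_nonneg fun _ _ => by positivity]
    exact ENNReal.ofReal_le_ofReal (sum_norm_sq_sum_mul_comp_iterate_le T hF1 c hK x)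
  have invariance (m : ℕ) : ∫⁻ x, ‖S (T^[m] x)‖ₑ ^ 2 ∂μ = ∫⁻ x, ‖S x‖ₑ ^ 2 ∂μ :=
    (hT.iterate m).lintegral_comp (hS.enorm.pow_const 2)
  have hN' : (N : ℝ≥0∞) ≠ 0 := by exact_mod_cast hN.ne'
  refine eLpNorm_two_le_ofReal (by positivity) ((ENNReal.mul_le_mul_iff_right hN'
    (ENNReal.natCast_ne_top N)).mp ?_)
  calc N * ∫⁻ x, ‖S x‖ₑ ^ 2 ∂μ = ∑ m ∈ Icc 1 N, ∫⁻ x, ‖S (T^[m] x)‖ₑ ^ 2 ∂μ := by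
        simp [invariance]
    _ = ∫⁻ x, ∑ m ∈ Icc 1 N, ‖S (T^[m] x)‖ₑ ^ 2 ∂μ :=
        (lintegral_finsetSum _ fun m _ =>
          (hS.comp (hT.measurable.iterate m)).enorm.pow_const 2).symm
    _ ≤ ∫⁻ _, ENNReal.ofReal (N * (2 * K) ^ 2) ∂μ := lintegral_mono pointwise
    _ = N * ENNReal.ofReal ((2 * K) ^ 2) := by
        rw [lintegral_const, measure_univ, mul_one, ENNReal.ofReal_mul (Nat.cast_nonneg _),
          ENNReal.ofReal_natCast]

section Cube

variable {ι : Type*} [Fintype ι] [DecidableEq ι]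

def cubeDot (ε : ι → Bool) (n : ι → ℕ) : ℕ := ∑ i, if ε i then n i else 0

lemma cubeDot_update {n : ι → ℕ} {j : ι} (hn : n j = 0) (ε : ι → Bool) (t : ℕ) :
    cubeDot ε (update n j t) = (if ε j then t else 0) + cubeDot ε n := by
  simp only [cubeDot]
  rw [Fintype.sum_eq_add_sum_compl j,
    Fintype.sum_eq_add_sum_compl j (fun i => if ε i then n i else 0), update_self, hn]
  have : ∀ i ∈ ({j}ᶜ : Finset ι), (if ε i then update n j t i else 0) = if ε i then n i else 0 :=
    fun i hi => by rw [update_of_ne (by simpa using hi)]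
  rw [sum_congr rfl this]
  split_ifs <;> simp

lemma Fintype.sum_piFinset_eq_sum_sum_update {α M : Type*} [DecidableEq α] [AddCommMonoid M]
    (s : ι → Finset α) (j : ι) (a : α) (g : (ι → α) → M) :
    ∑ n ∈ Fintype.piFinset s, g n =
      ∑ n ∈ Fintype.piFinset (update s j {a}), ∑ t ∈ s j, g (update n j t) := by
  rw [← sum_product']
  refine sum_nbij' (fun n => (update n j a, n j)) (fun p => update p.1 j p.2) ?_ ?_ ?_ ?_ ?_
  · intro n hn
    simp only [mem_product, Fintype.mem_piFinset] at hn ⊢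
    refine ⟨fun i => ?_, hn j⟩
    by_cases hi : i = j
    · subst hi; simp
    · simp [update_of_ne hi, hn i]
  · rintro ⟨n, t⟩ hp
    simp only [mem_product, Fintype.mem_piFinset] at hp ⊢
    intro i
    by_cases hi : i = j
    · subst hi; simpa using hp.2
    · simpa [update_of_ne hi] using hp.1 i
  · intro n _; simp
  · rintro ⟨n, t⟩ hp
    simp only [mem_product, Fintype.mem_piFinset] at hp
    have : n j = a := by simpa using hp.1 j
    simp [← this]
  · intro n _; simp

lemma prod_apply_update_eq_mul {M : Type*} [CommMonoid M] (b : ι → ℕ → M) (n : ι → ℕ) (j : ι)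
    (t : ℕ) : ∏ i, b i (update n j t i) = b j t * ∏ i, update b j 1 i (n i) := by
  rw [Fintype.prod_eq_mul_prod_compl j,
    Fintype.prod_eq_mul_prod_compl j (fun i => update b j 1 i (n i))]
  simp only [update_self, Pi.one_apply, one_mul]
  congr 1
  exact prod_congr rfl fun i hi => by
    have : i ≠ j := by simpa using hi
    simp [update_of_ne this]

lemma sum_norm_prod_update_le (b : ι → ℕ → ℂ) {s : Finset ℕ} {A : ℝ}
    (hb : ∀ i, ∑ t ∈ s, ‖b i t‖ ≤ A) (j : ι) (a : ℕ) :
    ∑ n ∈ Fintype.piFinset (update (fun _ => s) j {a}), ‖∏ i, update b j 1 i (n i)‖ ≤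
      A ^ (Fintype.card ι - 1) := by
  simp_rw [norm_prod]
  rw [← prod_univ_sum (update (fun _ => s) j {a}) fun i t => ‖update b j 1 i t‖]
  calc ∏ i, ∑ t ∈ update (fun _ => s) j {a} i, ‖update b j 1 i t‖
      ≤ ∏ i, update (fun _ => A) j 1 i := by
        refine prod_le_prod (fun i _ => by positivity) fun i _ => ?_
        by_cases hi : i = j
        · subst hi; simp
        · simpa [update_of_ne hi] using hb i
    _ = A ^ (Fintype.card ι - 1) := by
        rw [Fintype.prod_eq_mul_prod_compl j, update_self, one_mul,
          prod_congr rfl fun i hi => update_of_ne (by simpa using hi) (1 : ℝ) (fun _ => A),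
          prod_const, card_compl, card_singleton]

lemma prod_comp_iterate_cubeDot_update {X M : Type*} [CommMonoid M] (T : X → X)
    (f : (ι → Bool) → X → M) (E : Finset (ι → Bool)) {n : ι → ℕ} {j : ι} (hn : n j = 0)
    (t : ℕ) (x : X) :
    ∏ ε ∈ E, f ε (T^[cubeDot ε (update n j t)] x) =
      (∏ ε ∈ E with ε j, f ε (T^[cubeDot ε n] (T^[t] x))) *
        ∏ ε ∈ E with ¬ε j, f ε (T^[cubeDot ε n] x) := by
  rw [← prod_filter_mul_prod_filter_not E (fun ε => ε j)]
  congr 1 <;> refine prod_congr rfl fun ε hε => ?_ <;> rw [mem_filter] at hε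
  · rw [cubeDot_update hn, if_pos hε.2, add_comm, iterate_add_apply]
  · rw [cubeDot_update hn, if_neg hε.2, zero_add]

variable {X : Type*} [MeasurableSpace X] {μ : Measure X} [IsProbabilityMeasure μ] {T : X → X}
  {f : (ι → Bool) → X → ℂ}

lemma eLpNorm_sum_update_le (hT : MeasurePreserving T μ μ) (hf : ∀ ε, Measurable (f ε))
    (hf1 : ∀ ε x, ‖f ε x‖ ≤ 1) (E : Finset (ι → Bool)) (b : ι → ℕ → ℂ) {N : ℕ} (hN : 0 < N)
    {j : ι} {K : ℝ} (hK : ∀ z : ℂ, ‖z‖ = 1 → ‖∑ t ∈ Icc 1 N, b j t * z ^ t‖ ≤ K)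
    {n : ι → ℕ} (hn : n j = 0) :
    eLpNorm (fun x => ∑ t ∈ Icc 1 N, (∏ i, b i (update n j t i)) *
        ∏ ε ∈ E, f ε (T^[cubeDot ε (update n j t)] x)) 2 μ ≤
      ‖∏ i, update b j 1 i (n i)‖ₑ * ENNReal.ofReal (2 * K) := by
  set B := ∏ i, update b j 1 i (n i)
  set F : X → ℂ := fun y => ∏ ε ∈ E with ε j, f ε (T^[cubeDot ε n] y)
  set g : X → ℂ := fun x => ∏ ε ∈ E with ¬ε j, f ε (T^[cubeDot ε n] x)
  have hF : Measurable F :=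
    Finset.measurable_prod _ fun ε _ => (hf ε).comp (hT.measurable.iterate _)
  have hF1 (y : X) : ‖F y‖ ≤ 1 := by
    rw [norm_prod]; exact prod_le_one (fun _ _ => norm_nonneg _) fun ε _ => hf1 ε _
  have hg1 (x : X) : ‖g x‖ ≤ 1 := by
    rw [norm_prod]; exact prod_le_one (fun _ _ => norm_nonneg _) fun ε _ => hf1 ε _
  have hfactor (x : X) :
      ∑ t ∈ Icc 1 N, (∏ i, b i (update n j t i)) * ∏ ε ∈ E, f ε (T^[cubeDot ε (update n j t)] x) =
        B * (∑ t ∈ Icc 1 N, b j t * F (T^[t] x)) * g x := by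
    simp_rw [prod_apply_update_eq_mul b n j, prod_comp_iterate_cubeDot_update T f E hn, mul_sum,
      sum_mul]
    exact sum_congr rfl fun t _ => by ring
  calc _ ≤ eLpNorm (B • fun x => ∑ t ∈ Icc 1 N, b j t * F (T^[t] x)) 2 μ :=
        eLpNorm_mono fun x => by
          rw [hfactor, norm_mul, Pi.smul_apply, smul_eq_mul]
          exact mul_le_of_le_one_right (norm_nonneg _) (hg1 x)
    _ = ‖B‖ₑ * eLpNorm (fun x => ∑ t ∈ Icc 1 N, b j t * F (T^[t] x)) 2 μ :=
        eLpNorm_const_smul _ _ _ _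
    _ ≤ ‖B‖ₑ * ENNReal.ofReal (2 * K) := by
        gcongr
        exact eLpNorm_sum_mul_comp_iterate_le hT hF hF1 hN (b j) hK

theorem eLpNorm_sum_cube_le (hT : MeasurePreserving T μ μ) (hf : ∀ ε, Measurable (f ε))
    (hf1 : ∀ ε x, ‖f ε x‖ ≤ 1) (E : Finset (ι → Bool)) (b : ι → ℕ → ℂ) {N : ℕ} (hN : 0 < N)
    (hb : ∀ i, ∑ t ∈ Icc 1 N, ‖b i t‖ ≤ N) (j : ι) {K : ℝ}
    (hK : ∀ z : ℂ, ‖z‖ = 1 → ‖∑ t ∈ Icc 1 N, b j t * z ^ t‖ ≤ K) :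
    eLpNorm (fun x => ∑ n ∈ Fintype.piFinset (fun _ => Icc 1 N),
        (∏ i, b i (n i)) * ∏ ε ∈ E, f ε (T^[cubeDot ε n] x)) 2 μ ≤
      ENNReal.ofReal (N ^ (Fintype.card ι - 1) * (2 * K)) := by
  set P := Fintype.piFinset (update (fun _ => Icc 1 N) j {0})
  set fiber : (ι → ℕ) → X → ℂ := fun n x => ∑ t ∈ Icc 1 N, (∏ i, b i (update n j t i)) *
    ∏ ε ∈ E, f ε (T^[cubeDot ε (update n j t)] x)
  have hK0 : 0 ≤ K := (norm_nonneg _).trans (hK 1 norm_one)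
  have hsplit : (fun x => ∑ n ∈ Fintype.piFinset (fun _ => Icc 1 N),
      (∏ i, b i (n i)) * ∏ ε ∈ E, f ε (T^[cubeDot ε n] x)) = ∑ n ∈ P, fiber n := by
    ext x
    rw [Finset.sum_apply, Fintype.sum_piFinset_eq_sum_sum_update _ j 0]
  have hfiber (n : ι → ℕ) : Measurable (fiber n) := by
    have := hT.measurable
    fun_prop
  have hP (n : ι → ℕ) (hn : n ∈ P) : n j = 0 := by
    simpa using Fintype.mem_piFinset.mp hn j
  calc _ = eLpNorm (∑ n ∈ P, fiber n) 2 μ := by rw [hsplit]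
    _ ≤ ∑ n ∈ P, eLpNorm (fiber n) 2 μ :=
        eLpNorm_sum_le (fun n _ => (hfiber n).aestronglyMeasurable) one_le_two
    _ ≤ ∑ n ∈ P, ‖∏ i, update b j 1 i (n i)‖ₑ * ENNReal.ofReal (2 * K) :=
        sum_le_sum fun n hn => eLpNorm_sum_update_le hT hf hf1 E b hN hK (hP n hn)
    _ = ENNReal.ofReal (∑ n ∈ P, ‖∏ i, update b j 1 i (n i)‖) * ENNReal.ofReal (2 * K) := by
        rw [← sum_mul, ENNReal.ofReal_sum_of_nonneg fun _ _ => norm_nonneg _]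
        simp only [ofReal_norm]
    _ ≤ ENNReal.ofReal (N ^ (Fintype.card ι - 1)) * ENNReal.ofReal (2 * K) := by
        gcongr
        exact sum_norm_prod_update_le b hb j 0
    _ = ENNReal.ofReal (N ^ (Fintype.card ι - 1) * (2 * K)) :=
        (ENNReal.ofReal_mul (by positivity)).symm

end Cube

theorem cube_average_gowers_control_general (k : ℕ) :
    ∃ C : ℝ, 0 < C ∧
    ∀ b : Fin k → ℕ → ℂ,
      (∀ i : Fin k, ∀ c : ℝ, 0 < c →
        Tendsto (fun n : ℕ => ‖b i n‖ / (n : ℝ) ^ c) atTop (nhds 0)) →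
      (∀ i : Fin k, ∀ N : ℕ, 0 < N →
        (N : ℝ)⁻¹ * ∑ n ∈ Finset.Icc 1 N, ‖b i n‖ ≤ 1) →
      ∃ e : ℕ → ℝ, Tendsto e atTop (nhds 0) ∧
        ∀ (X : Type) (_ : MeasurableSpace X) (μ : Measure X), IsProbabilityMeasure μ →
          ∀ T : X → X, MeasurePreserving T μ μ → Function.Bijective T →
            ∀ f : (Fin k → Bool) → X → ℂ,
              (∀ ε, Measurable (f ε)) → (∀ ε x, ‖f ε x‖ ≤ 1) →
              ∀ j : Fin k, ∀ N : ℕ, 0 < N →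
                (eLpNorm (fun x =>
                    ((N : ℂ) ^ (k : ℕ))⁻¹ *
                      ∑ n ∈ Fintype.piFinset (fun _ : Fin k => Finset.Icc 1 N),
                        (∏ i : Fin k, b i (n i)) *
                          ∏ ε ∈ Finset.univ.filter
                              (fun ε : Fin k → Bool => ε ≠ fun _ => false),
                            f ε (T^[∑ i : Fin k, if ε i then n i else 0] x)) 2 μ).toReal ≤
                  C * (gowersNormNat (2 * N) 2
                        (fun n => if 1 ≤ n ∧ n ≤ N then b j n else 0) + e N) := by
  refine ⟨4, four_pos, fun b _ hmean => ⟨0, tendsto_const_nhds, ?_⟩⟩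
  intro X _ μ _ T hT _ f hf hf1 j N hN
  set G := gowersNormNat (2 * N) 2 (fun n => if 1 ≤ n ∧ n ≤ N then b j n else 0)
  have hb (i : Fin k) : ∑ t ∈ Finset.Icc 1 N, ‖b i t‖ ≤ N := by
    have := hmean i N hN
    rwa [inv_mul_le_iff₀ (by exact_mod_cast hN), mul_one] at this
  have hcube := eLpNorm_sum_cube_le hT hf hf1 {ε | ε ≠ fun _ => false} b hN hb j
    fun z hz => norm_sum_mul_pow_le_gowersNormNat (b j) N hz
  rw [Fintype.card_fin] at hcube
  have hk : k = k - 1 + 1 := by have := j.pos; omega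
  rw [Pi.zero_apply, add_zero]
  refine ENNReal.toReal_le_of_le_ofReal (mul_nonneg four_pos.le (gowersNormNat_two_nonneg _ _)) ?_
  calc eLpNorm (((N : ℂ) ^ k)⁻¹ • fun x => _) 2 μ
      = ‖((N : ℂ) ^ k)⁻¹‖ₑ * eLpNorm _ 2 μ := eLpNorm_const_smul _ _ _ _
    _ ≤ ENNReal.ofReal ((N ^ k)⁻¹) * ENNReal.ofReal (N ^ (k - 1) * (2 * (2 * N * G))) := by
        rw [← ofReal_norm, norm_inv, norm_pow, Complex.norm_natCast]
        gcongr
        exact hcube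
    _ = ENNReal.ofReal (4 * G) := by
        rw [← ENNReal.ofReal_mul (by positivity)]
        congr 1
        rw [hk, pow_succ, Nat.add_sub_cancel]
        field_simp
        ring

/-- Control of cube averages by the `U²` Gowers norm of any one of the weights:
for weights `b₁,…,b_k` of subexponential growth and average boundedly `≤ 1`, the
`L²(μ)` norm of the weighted cube average is bounded by
`C_k (‖b_j 1_{[1,N]}‖_{U²(ℤ_{2N})} + o_N(1))`, where `C_k` depends only on `k` and
the `o_N(1)` term depends only on the sequences `b₁,…,b_k`. -/
theorem cube_average_gowers_control (k : ℕ) (hk : 0 < k) :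
    ∃ C : ℝ, 0 < C ∧
    ∀ b : Fin k → ℕ → ℂ,
      (∀ i : Fin k, ∀ c : ℝ, 0 < c →
        Tendsto (fun n : ℕ => ‖b i n‖ / (n : ℝ) ^ c) atTop (nhds 0)) →
      (∀ i : Fin k, ∀ N : ℕ, 0 < N →
        (N : ℝ)⁻¹ * ∑ n ∈ Finset.Icc 1 N, ‖b i n‖ ≤ 1) →
      ∃ e : ℕ → ℝ, Tendsto e atTop (nhds 0) ∧
        ∀ (X : Type) (_ : MeasurableSpace X) (μ : Measure X), IsProbabilityMeasure μ →
          ∀ T : X → X, MeasurePreserving T μ μ → Function.Bijective T →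
            ∀ f : (Fin k → Bool) → X → ℂ,
              (∀ ε, Measurable (f ε)) → (∀ ε x, ‖f ε x‖ ≤ 1) →
              ∀ j : Fin k, ∀ N : ℕ, 0 < N →
                (eLpNorm (fun x =>
                    ((N : ℂ) ^ (k : ℕ))⁻¹ *
                      ∑ n ∈ Fintype.piFinset (fun _ : Fin k => Finset.Icc 1 N),
                        (∏ i : Fin k, b i (n i)) *
                          ∏ ε ∈ Finset.univ.filter
                              (fun ε : Fin k → Bool => ε ≠ fun _ => false),
                            f ε (T^[∑ i : Fin k, if ε i then n i else 0] x)) 2 μ).toReal ≤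
                  C * (gowersNormNat (2 * N) 2
                        (fun n => if 1 ≤ n ∧ n ≤ N then b j n else 0) + e N) :=
  cube_average_gowers_control_general k
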